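/- arXiv:2506.15797 — 4 statements merged into one kernel-verified Lean document; each statement's English description precedes it below -/
import Mathlib

section
/- Let n ≥ 2 and let q_1, …, q_n ∈ (0,1). Let t_{i:n} be defined by the GPTA recursion t_{i:n} = 2 − q_i q_{i+1} + (1 − q_i) t_{i+1:n} + q_i t_{i+2:n} for 1 ≤ i ≤ n−1, with t_{n:n} = 1 and t_{j:n} = 0 for j > n. Then for every i with 1 ≤ i ≤ n−1, the difference t_{i:n} − t_{i+1:n} equals the closed-form expression Δ_{i:n} = 2 − q_i q_{i+1} + Σ_{j=1}^{n−i−1} (−1)^j q_i⋯q_{i+j−1}(2 − q_{i+j} q_{i+j+1}) + (−1)^{n−i} q_i⋯q_{n−1}. -/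
/-- Closed-form expression `Δ_{i:n}` for the difference of expected test counts of the
generalized pairwise testing algorithm (GPTA), with the convention `Δ_{n:n} = 1`.
Here `q j` is the probability that unit `j` is good (units are 1-indexed), the product
`q_i ⋯ q_{i+j-1}` is `∏ k ∈ Finset.Ico i (i+j), q k`, and `q_i ⋯ q_{n-1}` is
`∏ k ∈ Finset.Ico i n, q k`. -/
noncomputable def gptDelta (q : ℕ → ℝ) (n i : ℕ) : ℝ :=
  if i = n then 1
  else 2 - q i * q (i + 1)
    + ∑ j ∈ Finset.Icc 1 (n - i - 1),
        (-1 : ℝ) ^ j * (∏ k ∈ Finset.Ico i (i + j), q k) * (2 - q (i + j) * q (i + j + 1))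
    + (-1 : ℝ) ^ (n - i) * ∏ k ∈ Finset.Ico i n, q k

lemma delta_rec (q : ℕ → ℝ) (n i : ℕ) (h : i < n) :
    gptDelta q n i = 2 - q i * q (i + 1) - q i * gptDelta q n (i + 1) := by
  rcases eq_or_lt_of_le (Nat.succ_le_of_lt h) with h1 | h1
  · subst h1
    rw [gptDelta, gptDelta, if_pos rfl, if_neg (by omega)]
    simp [show i + 1 - i - 1 = 0 from by omega, show i + 1 - i = 1 from by omega]
    ring
  · obtain ⟨s, rfl⟩ : ∃ s, n = i + 2 + s := ⟨n - i - 2, by omega⟩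
    rw [gptDelta, gptDelta, if_neg (by omega), if_neg (by omega)]
    simp only [show i + 2 + s - i - 1 = s + 1 from by omega,
      show i + 2 + s - (i + 1) - 1 = s from by omega,
      show i + 2 + s - i = s + 2 from by omega,
      show i + 2 + s - (i + 1) = s + 1 from by omega,
      show s + 2 - 1 = s + 1 from rfl, show s + 1 + 1 - 1 - 1 = s from rfl, show s + 1 - 1 = s from rfl,
      show s + 1 + 1 - 1 = s + 1 from rfl]
    rw [← Finset.Ico_add_one_right_eq_Icc 1 (s + 1), ← Finset.Ico_add_one_right_eq_Icc 1 s,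
      Finset.sum_Ico_eq_sum_range, Finset.sum_Ico_eq_sum_range]
    simp only [show s + 1 + 1 - 1 = s + 1 from by omega, show s + 1 - 1 = s from by omega,
      Nat.succ_eq_add_one]
    rw [Finset.sum_range_succ']
    have hlast : (∏ k ∈ Finset.Ico i (i + 2 + s), q k)
        = q i * ∏ k ∈ Finset.Ico (i + 1) (i + 2 + s), q k :=
      Finset.prod_eq_prod_Ico_succ_bot (by omega) q
    have hsum : ∀ j ∈ Finset.range s,
        (-1 : ℝ) ^ (1 + (j + 1)) * (∏ k ∈ Finset.Ico i (i + (1 + (j + 1))), q k)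
          * (2 - q (i + (1 + (j + 1))) * q (i + (1 + (j + 1)) + 1))
        = -(q i * ((-1 : ℝ) ^ (1 + j) * (∏ k ∈ Finset.Ico (i + 1) (i + 1 + (1 + j)), q k)
          * (2 - q (i + 1 + (1 + j)) * q (i + 1 + (1 + j) + 1)))) := by
      intro j _
      have hp : (∏ k ∈ Finset.Ico i (i + (1 + (j + 1))), q k)
          = q i * ∏ k ∈ Finset.Ico (i + 1) (i + (1 + (j + 1))), q k :=
        Finset.prod_eq_prod_Ico_succ_bot (by omega) q
      rw [hp, show i + (1 + (j + 1)) = i + 1 + (1 + j) from by omega]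
      ring
    rw [Finset.sum_congr rfl hsum, Finset.sum_neg_distrib, hlast, ← Finset.mul_sum]
    have hone : (∏ k ∈ Finset.Ico i (i + (1 + 0)), q k) = q i := by
      simp [Nat.Ico_succ_singleton]
    rw [hone]
    simp only [show i + (1 + 0) = i + 1 from rfl, show i + (1 + 0) + 1 = i + 1 + 1 from rfl]
    ring

/-- If `t` satisfies the GPTA recursion with boundary values `t n = 1` and
`t j = 0` for `j > n`, then for every `1 ≤ i ≤ n-1` the difference `t i - t (i+1)` equals
the closed-form expression `Δ_{i:n}`. -/
theorem gpta_difference_closed_form (n : ℕ) (hn : 2 ≤ n) (q : ℕ → ℝ)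
    (hq : ∀ i, 1 ≤ i → i ≤ n → q i ∈ Set.Ioo (0 : ℝ) 1)
    (t : ℕ → ℝ)
    (ht_n : t n = 1)
    (ht_gt : ∀ j, n < j → t j = 0)
    (ht_rec : ∀ i, 1 ≤ i → i ≤ n - 1 →
      t i = 2 - q i * q (i + 1) + (1 - q i) * t (i + 1) + q i * t (i + 2)) :
    ∀ i, 1 ≤ i → i ≤ n - 1 → t i - t (i + 1) = gptDelta q n i := by
  have key : ∀ k i, 1 ≤ i → i ≤ n - 1 → n - 1 - i = k → t i - t (i + 1) = gptDelta q n i := by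
    intro k
    induction k with
    | zero =>
      intro i h1 h2 h3
      have hi : i = n - 1 := by omega
      have hin : i + 1 = n := by omega
      have hrec := ht_rec i h1 h2
      rw [hin, ht_n, ht_gt (i + 2) (by omega)] at hrec
      rw [delta_rec q n i (by omega), hin, gptDelta, if_pos rfl, hrec, ht_n]; ring
    | succ k ih =>
      intro i h1 h2 h3
      have hk : t (i + 1) - t (i + 2) = gptDelta q n (i + 1) := by
        have := ih (i + 1) (by omega) (by omega) (by omega)
        simpa using this
      have hrec := ht_rec i h1 h2
      rw [delta_rec q n i (by omega), ← hk, hrec]; ring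
  intro i h1 h2
  exact key (n - 1 - i) i h1 h2 rfl
end

section
/- Let n ≥ 1 and let q_1, …, q_n ∈ (0,1). Let t_{i:n} be defined by the GPTA recursion t_{i:n} = 2 − q_i q_{i+1} + (1 − q_i) t_{i+1:n} + q_i t_{i+2:n} for 1 ≤ i ≤ n−1, with t_{n:n} = 1 and t_{j:n} = 0 for j > n. Then t_{1:n} = Σ_{i=1}^n Δ_{i:n}, where Δ_{i:n} is the closed-form expression 2 − q_i q_{i+1} + Σ_{j=1}^{n−i−1} (−1)^j q_i⋯q_{i+j−1}(2 − q_{i+j} q_{i+j+1}) + (−1)^{n−i} q_i⋯q_{n−1} for 1 ≤ i ≤ n−1, and Δ_{n:n} = 1. -/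
lemma sum_Icc_one (m : ℕ) (f : ℕ → ℝ) :
    ∑ j ∈ Finset.Icc 1 m, f j = ∑ j ∈ Finset.range m, f (1 + j) := by
  rw [← Finset.Ico_add_one_right_eq_Icc, Finset.sum_Ico_eq_sum_range]
  simp

lemma gptDelta_rec (q : ℕ → ℝ) (n i : ℕ) (hi : i < n) :
    gptDelta q n i = 2 - q i * q (i + 1) - q i * gptDelta q n (i + 1) := by
  rcases eq_or_lt_of_le (Nat.succ_le_of_lt hi) with h | h
  · subst h
    simp only [gptDelta, if_pos rfl, if_neg (by omega : ¬ i = i+1)]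
    have h1 : i + 1 - i - 1 = 0 := by omega
    have h2 : i + 1 - i = 1 := by omega
    rw [h1, h2]
    simp [Nat.Ico_succ_singleton]
    ring
  · obtain ⟨m, rfl⟩ : ∃ m, n = i + 2 + m := ⟨n - i - 2, by omega⟩
    have hne1 : ¬ i = i + 2 + m := by omega
    have hne2 : ¬ i + 1 = i + 2 + m := by omega
    simp only [gptDelta, if_neg hne1, if_neg hne2]
    have e1 : i + 2 + m - i - 1 = m + 1 := by omega
    have e2 : i + 2 + m - (i + 1) - 1 = m := by omega
    have e3 : i + 2 + m - i = m + 2 := by omega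
    have e4 : i + 2 + m - (i + 1) = m + 1 := by omega
    rw [e1, e2, e3, e4, sum_Icc_one, sum_Icc_one, Finset.sum_range_succ']
    have hprodtot : (∏ k ∈ Finset.Ico i (i + 2 + m), q k)
        = q i * ∏ k ∈ Finset.Ico (i + 1) (i + 2 + m), q k :=
      Finset.prod_eq_prod_Ico_succ_bot (by omega) q
    have hsum : ∀ j ∈ Finset.range m,
        (-1 : ℝ) ^ (1 + (j + 1)) * (∏ k ∈ Finset.Ico i (i + (1 + (j + 1))), q k) *
          (2 - q (i + (1 + (j + 1))) * q (i + (1 + (j + 1)) + 1))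
        = -(q i * ((-1 : ℝ) ^ (1 + j) * (∏ k ∈ Finset.Ico (i + 1) (i + 1 + (1 + j)), q k) *
            (2 - q (i + 1 + (1 + j)) * q (i + 1 + (1 + j) + 1)))) := by
      intro j _
      have hp : (∏ k ∈ Finset.Ico i (i + (1 + (j + 1))), q k)
          = q i * ∏ k ∈ Finset.Ico (i + 1) (i + (1 + (j + 1))), q k :=
        Finset.prod_eq_prod_Ico_succ_bot (by omega) q
      have he : i + (1 + (j + 1)) = i + 1 + (1 + j) := by omega
      rw [hp, he]
      ring
    rw [Finset.sum_congr rfl hsum, Finset.sum_neg_distrib, ← Finset.mul_sum, hprodtot]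
    simp only [add_zero, Nat.Ico_succ_singleton, Finset.prod_singleton]
    ring

/-- If `t` satisfies the GPTA recursion with boundary values `t n = 1` and
`t j = 0` for `j > n`, then `t 1 = ∑_{i=1}^n Δ_{i:n}` where `Δ_{n:n} = 1` and `Δ_{i:n}` is
the closed-form expression for `1 ≤ i ≤ n-1`. -/
theorem gpta_expectation_as_sum_of_deltas (n : ℕ) (hn : 1 ≤ n) (q : ℕ → ℝ)
    (hq : ∀ i, 1 ≤ i → i ≤ n → q i ∈ Set.Ioo (0 : ℝ) 1)
    (t : ℕ → ℝ)
    (ht_n : t n = 1)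
    (ht_gt : ∀ j, n < j → t j = 0)
    (ht_rec : ∀ i, 1 ≤ i → i ≤ n - 1 →
      t i = 2 - q i * q (i + 1) + (1 - q i) * t (i + 1) + q i * t (i + 2)) :
    t 1 = ∑ i ∈ Finset.Icc 1 n, gptDelta q n i := by
  have key : ∀ d i, i + d = n → 1 ≤ i → t i - t (i + 1) = gptDelta q n i := by
    intro d
    induction d with
    | zero =>
        intro i hi _
        simp only [Nat.add_zero] at hi; subst hi
        rw [ht_n, ht_gt (i+1) (by omega), gptDelta, if_pos rfl]; ring
    | succ d ih =>
        intro i hi h1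
        have hlt : i < n := by omega
        have hrec := ht_rec i h1 (by omega)
        have ih' := ih (i+1) (by omega) (by omega)
        rw [gptDelta_rec q n i hlt, ← ih', hrec]
        ring
  have tel : ∑ i ∈ Finset.Icc 1 n, (t i - t (i + 1)) = t 1 - t (n + 1) := by
    rw [sum_Icc_one]
    have := Finset.sum_range_sub' (fun j => t (1 + j)) n
    simpa [add_assoc, add_comm, add_left_comm] using this
  have : ∑ i ∈ Finset.Icc 1 n, (t i - t (i + 1)) = ∑ i ∈ Finset.Icc 1 n, gptDelta q n i := by
    apply Finset.sum_congr rfl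
    intro i hi
    simp only [Finset.mem_Icc] at hi
    exact key (n - i) i (by omega) hi.1
  rw [← this, tel, ht_gt (n+1) (by omega)]
  ring
end

section
/- Let n ≥ 2 and let q_1 ≥ q_2 ≥ ⋯ ≥ q_n with q_i ∈ ((√5 − 1)/2, 1/√2) for all i = 1, …, n. Then Δ_{1:n} < 1, where Δ_{1:n} = 2 − q_1 q_2 + Σ_{j=1}^{n−2} (−1)^j q_1⋯q_j (2 − q_{j+1} q_{j+2}) + (−1)^{n−1} q_1⋯q_{n−1}. -/
theorem prodshift (q : ℕ → ℝ) (j:ℕ) :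
    ∏ k ∈ Finset.Icc 1 (j+1), q k = q 1 * ∏ k ∈ Finset.Icc 1 j, q (k+1) := by
  induction j with
  | zero => simp
  | succ m ih =>
    rw [Finset.prod_Icc_succ_top (by omega : (1:ℕ) ≤ m+1+1) q,
      Finset.prod_Icc_succ_top (by omega : (1:ℕ) ≤ m+1) (fun k => q (k+1)), ih]
    ring

theorem delta_rec_s2 (q : ℕ → ℝ) (m : ℕ) :
    2 - q 1 * q 2
      + ∑ j ∈ Finset.Icc 1 (m+1), (-1:ℝ)^j * (∏ k ∈ Finset.Icc 1 j, q k) * (2 - q (j+1) * q (j+2))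
      + (-1:ℝ)^(m+2) * ∏ k ∈ Finset.Icc 1 (m+2), q k
    = 2 - q 1 * q 2
      - q 1 * (2 - q 2 * q 3
        + ∑ j ∈ Finset.Icc 1 m, (-1:ℝ)^j * (∏ k ∈ Finset.Icc 1 j, q (k+1)) * (2 - q (j+2) * q (j+3))
        + (-1:ℝ)^(m+1) * ∏ k ∈ Finset.Icc 1 (m+1), q (k+1)) := by
  induction m with
  | zero =>
    norm_num [Finset.Icc_self, show Finset.Icc 1 2 = {1,2} from rfl]
    ring
  | succ m ih =>
    rw [prodshift q (m+1)] at ih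
    rw [Finset.sum_Icc_succ_top (by omega : (1:ℕ) ≤ m+1+1)
        (fun j => (-1:ℝ)^j * (∏ k ∈ Finset.Icc 1 j, q k) * (2 - q (j+1) * q (j+2))),
      Finset.sum_Icc_succ_top (by omega : (1:ℕ) ≤ m+1)
        (fun j => (-1:ℝ)^j * (∏ k ∈ Finset.Icc 1 j, q (k+1)) * (2 - q (j+2) * q (j+3))),
      prodshift q (m+2), prodshift q (m+1),
      Finset.prod_Icc_succ_top (by omega : (1:ℕ) ≤ m+1+1) (fun k => q (k+1))]
    linear_combination ih

theorem gpta_aux (n : ℕ) (hn : 2 ≤ n) (q : ℕ → ℝ)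
    (hmono : ∀ i j, 1 ≤ i → i ≤ j → j ≤ n → q j ≤ q i)
    (hq : ∀ i, 1 ≤ i → i ≤ n →
      q i ∈ Set.Ioo ((Real.sqrt 5 - 1) / 2) (1 / Real.sqrt 2)) :
    2 - q 1 - q 1 * q 2 ≤
      2 - q 1 * q 2
        + ∑ j ∈ Finset.Icc 1 (n - 2),
            (-1 : ℝ) ^ j * (∏ k ∈ Finset.Icc 1 j, q k) * (2 - q (j + 1) * q (j + 2))
        + (-1 : ℝ) ^ (n - 1) * ∏ k ∈ Finset.Icc 1 (n - 1), q k
    ∧ 2 - q 1 * q 2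
        + ∑ j ∈ Finset.Icc 1 (n - 2),
            (-1 : ℝ) ^ j * (∏ k ∈ Finset.Icc 1 j, q k) * (2 - q (j + 1) * q (j + 2))
        + (-1 : ℝ) ^ (n - 1) * ∏ k ∈ Finset.Icc 1 (n - 1), q k < 1 := by
  have s5 : Real.sqrt 5 ^ 2 = 5 := Real.sq_sqrt (by norm_num)
  have s5n : (0:ℝ) ≤ Real.sqrt 5 := Real.sqrt_nonneg 5
  have ha : (0:ℝ) < (Real.sqrt 5 - 1)/2 := by nlinarith
  have hb : 1 / Real.sqrt 2 < 1 := by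
    have h2 : (0:ℝ) < Real.sqrt 2 := Real.sqrt_pos.mpr (by norm_num)
    rw [div_lt_one h2]
    nlinarith [Real.sq_sqrt (by norm_num : (0:ℝ) ≤ 2), Real.sqrt_nonneg 2]
  induction n, hn using Nat.le_induction generalizing q with
  | base =>
    have h1 := hq 1 (by norm_num) (by norm_num)
    have h2 := hq 2 (by norm_num) (by norm_num)
    simp only [show (2:ℕ) - 2 = 0 from rfl, show (2:ℕ) - 1 = 1 from rfl,
      Finset.Icc_self, show Finset.Icc 1 0 = (∅ : Finset ℕ) from rfl,
      Finset.sum_empty, Finset.prod_singleton, pow_one]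
    constructor
    · linarith
    · nlinarith [mul_pos (sub_pos.mpr h1.1) (sub_pos.mpr h2.1), h1.1, h2.1]
  | succ n hn2 ih =>
    obtain ⟨m, rfl⟩ : ∃ m, n = m + 2 := ⟨n - 2, by omega⟩
    have e1 : m + 2 + 1 - 2 = m + 1 := by omega
    have e2 : m + 2 + 1 - 1 = m + 2 := by omega
    rw [e1, e2, delta_rec_s2 q m]
    have IH := ih (fun k => q (k+1))
      (fun i j hi hij hj => hmono (i+1) (j+1) (by omega) (by omega) (by omega))
      (fun i hi hil => hq (i+1) (by omega) (by omega))
    have e3 : m + 2 - 2 = m := by omega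
    have e4 : m + 2 - 1 = m + 1 := by omega
    simp only [e3, e4, add_assoc, Nat.reduceAdd] at IH
    have h1 := hq 1 (by norm_num) (by omega)
    have h2 := hq 2 (by norm_num) (by omega)
    have h3 := hq 3 (by norm_num) (by omega)
    have hq1 : 0 < q 1 := lt_trans ha h1.1
    have hq2 : 0 < q 2 := lt_trans ha h2.1
    have hq3 : 0 < q 3 := lt_trans ha h3.1
    have h21 : q 2 ≤ q 1 := hmono 1 2 (by norm_num) (by norm_num) (by omega)
    have h32 : q 3 ≤ q 2 := hmono 2 3 (by norm_num) (by norm_num) (by omega)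
    have hq1lt : q 1 < 1 := lt_trans h1.2 hb
    have hsum : 0 < q 1 ^ 2 + q 1 - 1 := by nlinarith [h1.1]
    have k3 : q 1 ^ 3 < 2 * q 1 - 1 := by
      nlinarith [mul_pos (sub_pos.mpr hq1lt) hsum]
    constructor
    · nlinarith [IH.2, mul_lt_mul_of_pos_left IH.2 hq1]
    · nlinarith [mul_le_mul_of_nonneg_left IH.1 (le_of_lt hq1),
        mul_le_mul h21 h32 (le_of_lt hq3) (le_of_lt hq1),
        mul_le_mul_of_nonneg_left
          (mul_le_mul h21 h32 (le_of_lt hq3) (le_of_lt hq1)) (le_of_lt hq1)]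


/-- If `n ≥ 2`, `q 1 ≥ q 2 ≥ ⋯ ≥ q n`, and every `q i` lies in
`((√5 - 1)/2, 1/√2)`, then `Δ_{1:n} < 1`, where
`Δ_{1:n} = 2 - q 1 * q 2 + ∑_{j=1}^{n-2} (-1)^j q_1⋯q_j (2 - q_{j+1} q_{j+2})
  + (-1)^{n-1} q_1⋯q_{n-1}`. -/
theorem gpta_delta_one_lt_one (n : ℕ) (hn : 2 ≤ n) (q : ℕ → ℝ)
    (hmono : ∀ i j, 1 ≤ i → i ≤ j → j ≤ n → q j ≤ q i)
    (hq : ∀ i, 1 ≤ i → i ≤ n →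
      q i ∈ Set.Ioo ((Real.sqrt 5 - 1) / 2) (1 / Real.sqrt 2)) :
    2 - q 1 * q 2
      + ∑ j ∈ Finset.Icc 1 (n - 2),
          (-1 : ℝ) ^ j * (∏ k ∈ Finset.Icc 1 j, q k) * (2 - q (j + 1) * q (j + 2))
      + (-1 : ℝ) ^ (n - 1) * ∏ k ∈ Finset.Icc 1 (n - 1), q k < 1 :=
  (gpta_aux n hn q hmono hq).2
end

section
/- Let n ≥ 2 and let q_1 ≥ q_2 ≥ ⋯ ≥ q_n with q_i ∈ ((√5 − 1)/2, 1/√2) for all i. Let t_{i:n} be defined by the GPTA recursion t_{i:n} = 2 − q_i q_{i+1} + (1 − q_i) t_{i+1:n} + q_i t_{i+2:n} for 1 ≤ i ≤ n−1, with t_{n:n} = 1 and t_{j:n} = 0 for j > n. Then 1 + t_{2:n} > t_{1:n}; that is, a nested procedure that first tests unit 1 individually and then applies the generalized pairwise testing algorithm to units 2,…,n uses strictly more tests in expectation than applying the generalized pairwise testing algorithm to units 1,…,n. -/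
/-- Let `n ≥ 2`, `q 1 ≥ ⋯ ≥ q n` with all
`q i ∈ ((√5 - 1)/2, 1/√2)`, and let `t` satisfy the GPTA recursion
`t i = 2 - q i * q (i+1) + (1 - q i) * t (i+1) + q i * t (i+2)` for `1 ≤ i ≤ n-1`,
with `t n = 1` and `t j = 0` for `j > n`. Then `1 + t 2 > t 1`: first testing unit 1
individually and then running the GPTA on units `2, …, n` uses strictly more tests in
expectation than running the GPTA on units `1, …, n`. -/
theorem gpta_beats_first_individual_test (n : ℕ) (hn : 2 ≤ n) (q : ℕ → ℝ)
    (hmono : ∀ i j, 1 ≤ i → i ≤ j → j ≤ n → q j ≤ q i)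
    (hq : ∀ i, 1 ≤ i → i ≤ n →
      q i ∈ Set.Ioo ((Real.sqrt 5 - 1) / 2) (1 / Real.sqrt 2))
    (t : ℕ → ℝ)
    (ht_n : t n = 1)
    (ht_gt : ∀ j, n < j → t j = 0)
    (ht_rec : ∀ i, 1 ≤ i → i ≤ n - 1 →
      t i = 2 - q i * q (i + 1) + (1 - q i) * t (i + 1) + q i * t (i + 2)) :
    1 + t 2 > t 1 := by
  have h5 : Real.sqrt 5 ^ 2 = 5 := Real.sq_sqrt (by norm_num)
  have h5nn : 0 ≤ Real.sqrt 5 := Real.sqrt_nonneg 5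
  have h5gt : (2:ℝ) < Real.sqrt 5 := by nlinarith
  have h2 : Real.sqrt 2 ^ 2 = 2 := Real.sq_sqrt (by norm_num)
  have h2nn : 0 ≤ Real.sqrt 2 := Real.sqrt_nonneg 2
  have h2gt : (1:ℝ) < Real.sqrt 2 := by nlinarith
  -- bounds for each q i, 1 ≤ i ≤ n
  have hqb : ∀ i, 1 ≤ i → i ≤ n → 1/2 < q i ∧ q i < 1 := by
    intro i h1 h2'
    obtain ⟨hl, hr⟩ := hq i h1 h2'
    constructor
    · nlinarith
    · have : 1 / Real.sqrt 2 < 1 := by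
        rw [div_lt_one (by linarith)]; linarith
      linarith
  -- key quadratic fact: q i * (q i + 1) > 1
  have hquad : ∀ i, 1 ≤ i → i ≤ n → 1 < q i * (q i + 1) := by
    intro i h1 h2'
    obtain ⟨hl, _⟩ := hq i h1 h2'
    nlinarith
  -- key cubic fact: q i * (2 - q i ^ 2) > 1
  have hcubic : ∀ i, 1 ≤ i → i ≤ n → 1 < q i * (2 - q i ^ 2) := by
    intro i h1 h2'
    obtain ⟨hl, _⟩ := hq i h1 h2'
    have hb1 : q i < 1 := (hqb i h1 h2').2
    have hfac : 0 < q i ^ 2 + q i - 1 := by nlinarith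
    nlinarith [mul_pos (by linarith : (0:ℝ) < 1 - q i) hfac]
  -- main downward induction
  have key : ∀ k i, 2 ≤ i → i ≤ n → n - i = k →
      t i - t (i+1) ≤ 1 ∧ 1 < q i * (q i + (t i - t (i+1))) := by
    intro k
    induction k using Nat.strong_induction_on with
    | _ k ih =>
      intro i hi2 hin hk
      rcases eq_or_lt_of_le hin with heq | hlt
      · -- i = n
        subst heq
        have ht1 : t (i+1) = 0 := ht_gt (i+1) (by omega)
        rw [ht_n, ht1]
        constructor
        · norm_num
        · simpa using hquad i (by omega) le_rfl
      · -- i < n, so i ≤ n - 1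
        have hrec := ht_rec i (by omega) (by omega)
        have hIH := ih (n - (i+1)) (by omega) (i+1) (by omega) (by omega) rfl
        obtain ⟨hd1, hd2⟩ := hIH
        have hq1 := hqb i (by omega) (by omega)
        have hq2 := hqb (i+1) (by omega) (by omega)
        have hmon := hmono i (i+1) (by omega) (by omega) (by omega)
        -- S := q (i+1) + (t (i+1) - t (i+2)) > 0
        have hSpos : 0 < q (i+1) + (t (i+1) - t (i+2)) := by nlinarith
        have hd : t i - t (i+1) = 2 - q i * (q (i+1) + (t (i+1) - t (i+2))) := by
          rw [hrec]; ring
        constructor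
        · rw [hd]
          nlinarith
        · have hcub := hcubic i (by omega) (by omega)
          rw [hd]
          nlinarith
  -- conclude
  have hrec1 := ht_rec 1 le_rfl (by omega)
  have hk2 := key (n - 2) 2 le_rfl hn rfl
  obtain ⟨_, hK⟩ := hk2
  have hq1 := hqb 1 le_rfl (by omega)
  have hq2 := hqb 2 (by omega) hn
  have hmon := hmono 1 2 le_rfl (by omega) hn
  have hSpos : 0 < q 2 + (t 2 - t 3) := by nlinarith
  have : t 3 = t (2 + 1) := by norm_num
  rw [hrec1]
  nlinarith
end
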